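/- arXiv:2501.16152 — 8 statements merged into one kernel-verified Lean document; each statement's English description precedes it below -/
import Mathlib

section
/- Let h, h' : Z → X and f, g : X → Y be fibrewise maps over B with f ∘ h' ≃_B g ∘ h'. Then D_B(f ∘ h, g ∘ h) ≤ D_B(h, h'). -/
open scoped unitInterval

variable {B X Y Z X' Y' : Type*} [TopologicalSpace B] [TopologicalSpace X]
  [TopologicalSpace Y] [TopologicalSpace Z] [TopologicalSpace X'] [TopologicalSpace Y']

/-- `f` and `g` are fibrewise homotopic over `B` on the subset `U ⊆ X`:
there is a homotopy `H` from `f|U` to `g|U` each of whose stages is fibrewise. -/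
def FibHomotopicOn (pX : X → B) (pY : Y → B) (f g : X → Y) (U : Set X) : Prop :=
  ∃ H : C(U × unitInterval, Y),
    (∀ u : U, H (u, 0) = f u) ∧ (∀ u : U, H (u, 1) = g u) ∧
    (∀ (u : U) (t : unitInterval), pY (H (u, t)) = pX u)

/-- The parametrized (fibrewise) homotopic distance `D_B(f,g)`: the least `n`
such that `X` has an open cover by `n+1` sets on each of which `f` and `g` are
fibrewise homotopic (`∞` if there is no such cover). -/
noncomputable def fibDist (pX : X → B) (pY : Y → B) (f g : X → Y) : ℕ∞ :=
  sInf ((fun n : ℕ => (n : ℕ∞)) ''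
    {n : ℕ | ∃ U : Fin (n + 1) → Set X,
      (∀ i, IsOpen (U i)) ∧ (⋃ i, U i) = Set.univ ∧
      ∀ i, FibHomotopicOn pX pY f g (U i)})

lemma FibHomotopicOn.symm' {pZ : Z → B} {pY : Y → B} {a b : Z → Y} {U : Set Z}
    (h1 : FibHomotopicOn pZ pY a b U) : FibHomotopicOn pZ pY b a U := by
  obtain ⟨H, H0, H1, Hp⟩ := h1
  refine ⟨⟨fun p => H (p.1, unitInterval.symm p.2),
    H.continuous.comp (continuous_fst.prodMk
      (unitInterval.continuous_symm.comp continuous_snd))⟩, ?_, ?_, ?_⟩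
  · intro u; simp only [ContinuousMap.coe_mk, unitInterval.symm_zero]; exact H1 u
  · intro u; simp only [ContinuousMap.coe_mk, unitInterval.symm_one]; exact H0 u
  · intro u t; exact Hp u _

lemma FibHomotopicOn.trans' {pZ : Z → B} {pY : Y → B} {a b c : Z → Y} {U : Set Z}
    (h1 : FibHomotopicOn pZ pY a b U) (h2 : FibHomotopicOn pZ pY b c U) :
    FibHomotopicOn pZ pY a c U := by
  obtain ⟨H, H0, H1, Hp⟩ := h1
  obtain ⟨G, G0, G1, Gp⟩ := h2
  let A : C(U, Y) := ⟨fun u => H (u, 0),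
    H.continuous.comp (continuous_id.prodMk continuous_const)⟩
  let Bm : C(U, Y) := ⟨fun u => H (u, 1),
    H.continuous.comp (continuous_id.prodMk continuous_const)⟩
  let Cm : C(U, Y) := ⟨fun u => G (u, 1),
    G.continuous.comp (continuous_id.prodMk continuous_const)⟩
  let F : ContinuousMap.Homotopy A Bm :=
    { toFun := fun p => H (p.2, p.1)
      continuous_toFun := H.continuous.comp (continuous_snd.prodMk continuous_fst)
      map_zero_left := fun u => rfl
      map_one_left := fun u => rfl }
  let G' : ContinuousMap.Homotopy Bm Cm :=
    { toFun := fun p => G (p.2, p.1)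
      continuous_toFun := G.continuous.comp (continuous_snd.prodMk continuous_fst)
      map_zero_left := fun u => by
        show G (u, 0) = H (u, 1)
        rw [G0 u, ← H1 u]
      map_one_left := fun u => rfl }
  let K := F.trans G'
  refine ⟨⟨fun p => K (p.2, p.1),
    K.continuous.comp (continuous_snd.prodMk continuous_fst)⟩, ?_, ?_, ?_⟩
  · intro u
    show K (0, u) = a u
    rw [K.apply_zero u]
    exact H0 u
  · intro u
    show K (1, u) = c u
    rw [K.apply_one u]
    exact G1 u
  · intro u t
    show pY (K (t, u)) = pZ u
    rw [ContinuousMap.Homotopy.trans_apply]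
    split_ifs
    · exact Hp u _
    · exact Gp u _

lemma FibHomotopicOn.compLeft {pZ : Z → B} {pX : X → B} {pY : Y → B}
    {a b : Z → X} {U : Set Z} (f : X → Y) (hf : Continuous f)
    (hfp : ∀ x, pY (f x) = pX x)
    (h1 : FibHomotopicOn pZ pX a b U) :
    FibHomotopicOn pZ pY (f ∘ a) (f ∘ b) U := by
  obtain ⟨H, H0, H1, Hp⟩ := h1
  refine ⟨⟨fun p => f (H p), hf.comp H.continuous⟩, ?_, ?_, ?_⟩
  · intro u; simp only [ContinuousMap.coe_mk, Function.comp_apply]; rw [H0 u]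
  · intro u; simp only [ContinuousMap.coe_mk, Function.comp_apply]; rw [H1 u]
  · intro u t; simp only [ContinuousMap.coe_mk]; rw [hfp, Hp]

lemma FibHomotopicOn.restrictSet {pZ : Z → B} {pY : Y → B} {a b : Z → Y}
    (h1 : FibHomotopicOn pZ pY a b Set.univ) (U : Set Z) :
    FibHomotopicOn pZ pY a b U := by
  obtain ⟨H, H0, H1, Hp⟩ := h1
  refine ⟨⟨fun p => H (⟨p.1.1, trivial⟩, p.2),
    H.continuous.comp
      (((continuous_subtype_val.comp continuous_fst).subtype_mk _).prodMk
        continuous_snd)⟩, ?_, ?_, ?_⟩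
  · intro u; exact H0 ⟨u.1, trivial⟩
  · intro u; exact H1 ⟨u.1, trivial⟩
  · intro u t; exact Hp ⟨u.1, trivial⟩ t

theorem fibDist_comp_le_of_homotopic (pX : X → B) (pY : Y → B) (pZ : Z → B)
    (h h' : Z → X) (f g : X → Y)
    (hh : Continuous h) (hh' : Continuous h') (hf : Continuous f) (hg : Continuous g)
    (hhp : ∀ z, pX (h z) = pZ z) (hh'p : ∀ z, pX (h' z) = pZ z)
    (hfp : ∀ x, pY (f x) = pX x) (hgp : ∀ x, pY (g x) = pX x)
    (hfh' : FibHomotopicOn pZ pY (f ∘ h') (g ∘ h') Set.univ) :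
    fibDist pZ pY (f ∘ h) (g ∘ h) ≤ fibDist pZ pX h h' := by
  apply sInf_le_sInf
  apply Set.image_mono
  rintro n ⟨U, hop, hcov, hH⟩
  refine ⟨U, hop, hcov, fun i => ?_⟩
  have step1 : FibHomotopicOn pZ pY (f ∘ h) (f ∘ h') (U i) :=
    (hH i).compLeft f hf hfp
  have step2 : FibHomotopicOn pZ pY (f ∘ h') (g ∘ h') (U i) :=
    hfh'.restrictSet (U i)
  have step3 : FibHomotopicOn pZ pY (g ∘ h') (g ∘ h) (U i) :=
    ((hH i).compLeft g hg hgp).symm'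
  exact step1.trans' (step2.trans' step3)
end

section
/- If h : Y → Y' is a fibrewise map admitting a left fibrewise homotopy inverse (i.e., there is a fibrewise map h' : Y' → Y with h' ∘ h ≃_B id_Y), then for all fibrewise maps f, g : X → Y, D_B(h ∘ f, h ∘ g) = D_B(f, g). -/
/-! Post-composing with `h` turns a fibrewise homotopy `f ≃_B g` on `U` into one
`h ∘ f ≃_B h ∘ g`; conversely `f ≃_B h' ∘ h ∘ f ≃_B h' ∘ h ∘ g ≃_B g` on `U`, the outer steps
being the homotopy `h' ∘ h ≃_B id` pulled back along `f` and `g`. So the two distances are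
infima over the same open covers. -/

open scoped unitInterval

variable {B X Y Z X' Y' : Type*} [TopologicalSpace B] [TopologicalSpace X]
  [TopologicalSpace Y] [TopologicalSpace Z] [TopologicalSpace X'] [TopologicalSpace Y']

section Fibrewise

omit [TopologicalSpace B]

variable {pX : X → B} {pY : Y → B}

theorem fibHomotopicOn_iff_homotopicWith {f g : X → Y} {U : Set X} :
    FibHomotopicOn pX pY f g U ↔ ∃ F G : C(U, Y), (∀ u, F u = f u) ∧ (∀ u, G u = g u) ∧
      F.HomotopicWith G (fun k => ∀ u, pY (k u) = pX u) := by
  constructor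
  · rintro ⟨H, H0, H1, Hp⟩
    refine ⟨H.comp ((ContinuousMap.id U).prodMk (.const U 0)),
      H.comp ((ContinuousMap.id U).prodMk (.const U 1)), H0, H1,
      ⟨{ toContinuousMap := H.comp .prodSwap
         map_zero_left := fun _ => rfl
         map_one_left := fun _ => rfl
         prop' := fun t u => Hp u t }⟩⟩
  · rintro ⟨F, G, hF, hG, ⟨K⟩⟩
    exact ⟨K.toContinuousMap.comp .prodSwap, fun u => (K.apply_zero u).trans (hF u),
      fun u => (K.apply_one u).trans (hG u), fun u t => K.prop t u⟩

theorem FibHomotopicOn.symm {f g : X → Y} {U : Set X} (hfg : FibHomotopicOn pX pY f g U) :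
    FibHomotopicOn pX pY g f U := by
  obtain ⟨F, G, hF, hG, hFG⟩ := fibHomotopicOn_iff_homotopicWith.1 hfg
  exact fibHomotopicOn_iff_homotopicWith.2 ⟨G, F, hG, hF, hFG.symm⟩

theorem FibHomotopicOn.trans {f g k : X → Y} {U : Set X} (hfg : FibHomotopicOn pX pY f g U)
    (hgk : FibHomotopicOn pX pY g k U) : FibHomotopicOn pX pY f k U := by
  obtain ⟨F, G, hF, hG, hFG⟩ := fibHomotopicOn_iff_homotopicWith.1 hfg
  obtain ⟨G', K, hG', hK, hGK⟩ := fibHomotopicOn_iff_homotopicWith.1 hgk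
  obtain rfl : G = G' := ContinuousMap.ext fun u => (hG u).trans (hG' u).symm
  exact fibHomotopicOn_iff_homotopicWith.2 ⟨F, K, hF, hK, hFG.trans hGK⟩

theorem FibHomotopicOn.comp_left {pZ : Z → B} {f g : X → Y} {U : Set X}
    (hfg : FibHomotopicOn pX pY f g U) {h : Y → Z} (hh : Continuous h)
    (hhp : ∀ y, pZ (h y) = pY y) : FibHomotopicOn pX pZ (h ∘ f) (h ∘ g) U := by
  obtain ⟨H, H0, H1, Hp⟩ := hfg
  exact ⟨⟨h ∘ H, hh.comp H.continuous⟩, fun u => congrArg h (H0 u), fun u => congrArg h (H1 u),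
    fun u t => (hhp _).trans (Hp u t)⟩

theorem FibHomotopicOn.comp_right {pZ : Z → B} {a b : Z → Y} {V : Set Z}
    (hab : FibHomotopicOn pZ pY a b V) {φ : X → Z} (hφ : Continuous φ) {U : Set X}
    (hUV : Set.MapsTo φ U V) (hφp : ∀ x, pZ (φ x) = pX x) :
    FibHomotopicOn pX pY (a ∘ φ) (b ∘ φ) U := by
  obtain ⟨H, H0, H1, Hp⟩ := hab
  let φUV : C(U, V) := ⟨hUV.restrict φ U V, hφ.restrict hUV⟩
  exact ⟨H.comp (φUV.prodMap (.id I)), fun u => H0 (φUV u), fun u => H1 (φUV u),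
    fun u t => (Hp (φUV u) t).trans (hφp u)⟩

theorem fibHomotopicOn_comp_left_iff_of_leftInverse {pZ : Z → B} {f g : X → Y}
    (hf : Continuous f) (hg : Continuous g)
    (hfp : ∀ x, pY (f x) = pX x) (hgp : ∀ x, pY (g x) = pX x)
    {h : Y → Z} {h' : Z → Y} (hh : Continuous h) (hh' : Continuous h')
    (hhp : ∀ y, pZ (h y) = pY y) (hh'p : ∀ z, pY (h' z) = pZ z)
    (hleft : FibHomotopicOn pY pY (h' ∘ h) id Set.univ) (U : Set X) :
    FibHomotopicOn pX pZ (h ∘ f) (h ∘ g) U ↔ FibHomotopicOn pX pY f g U := by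
  refine ⟨fun hhfg => ?_, fun hfg => hfg.comp_left hh hhp⟩
  have hf' : FibHomotopicOn pX pY (h' ∘ h ∘ f) f U := hleft.comp_right hf (Set.mapsTo_univ _ _) hfp
  have hg' : FibHomotopicOn pX pY (h' ∘ h ∘ g) g U := hleft.comp_right hg (Set.mapsTo_univ _ _) hgp
  exact hf'.symm.trans ((hhfg.comp_left hh' hh'p).trans hg')

theorem fibDist_congr {pX : X → B} {pY : Y → B} {pY' : Y' → B} {f g : X → Y} {f' g' : X → Y'}
    (hU : ∀ U, IsOpen U → (FibHomotopicOn pX pY f g U ↔ FibHomotopicOn pX pY' f' g' U)) :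
    fibDist pX pY f g = fibDist pX pY' f' g' := by
  unfold fibDist
  congr! 6 with n U
  exact and_congr_right fun hUo => and_congr_right' <| forall_congr' fun i => hU (U i) (hUo i)

end Fibrewise

theorem fibDist_postcomp_eq_of_leftInverse (pX : X → B) (pY : Y → B) (pY' : Y' → B)
    (f g : X → Y) (h : Y → Y') (h' : Y' → Y)
    (hf : Continuous f) (hg : Continuous g) (hh : Continuous h) (hh' : Continuous h')
    (hfp : ∀ x, pY (f x) = pX x) (hgp : ∀ x, pY (g x) = pX x)
    (hhp : ∀ y, pY' (h y) = pY y) (hh'p : ∀ y, pY (h' y) = pY' y)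
    (hleft : FibHomotopicOn pY pY (h' ∘ h) id Set.univ) :
    fibDist pX pY' (h ∘ f) (h ∘ g) = fibDist pX pY f g :=
  fibDist_congr fun U _ =>
    fibHomotopicOn_comp_left_iff_of_leftInverse hf hg hfp hgp hh hh' hhp hh'p hleft U
end

section
/- If h : X' → X is a fibrewise map admitting a right fibrewise homotopy inverse (i.e., there is a fibrewise map h'' : X → X' with h ∘ h'' ≃_B id_X), then for all fibrewise maps f, g : X → Y, D_B(f ∘ h, g ∘ h) = D_B(f, g). -/
open scoped unitInterval

variable {B X Y Z X' Y' : Type*} [TopologicalSpace B] [TopologicalSpace X]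
  [TopologicalSpace Y] [TopologicalSpace Z] [TopologicalSpace X'] [TopologicalSpace Y']

lemma fibSymm {pX : X → B} {pY : Y → B} {f g : X → Y} {U : Set X}
    (hfg : FibHomotopicOn pX pY f g U) : FibHomotopicOn pX pY g f U := by
  obtain ⟨H, h0, h1, hp⟩ := hfg
  refine ⟨H.comp ⟨fun p => (p.1, unitInterval.symm p.2), by continuity⟩, ?_, ?_, ?_⟩
  · intro u; simp only [ContinuousMap.comp_apply, ContinuousMap.coe_mk, unitInterval.symm_zero]
    exact h1 u
  · intro u; simp only [ContinuousMap.comp_apply, ContinuousMap.coe_mk, unitInterval.symm_one]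
    exact h0 u
  · intro u t; exact hp u _

lemma fibTrans {pX : X → B} {pY : Y → B} {f g k : X → Y} {U : Set X}
    (hfg : FibHomotopicOn pX pY f g U) (hgk : FibHomotopicOn pX pY g k U) :
    FibHomotopicOn pX pY f k U := by
  obtain ⟨H1, h10, h11, h1p⟩ := hfg
  obtain ⟨H2, h20, h21, h2p⟩ := hgk
  let c0 : C(U, Y) := H1.comp ⟨fun u => (u, 0), continuous_id.prodMk continuous_const⟩
  let c1 : C(U, Y) := H1.comp ⟨fun u => (u, 1), continuous_id.prodMk continuous_const⟩
  let d0 : C(U, Y) := H2.comp ⟨fun u => (u, 0), continuous_id.prodMk continuous_const⟩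
  let d1 : C(U, Y) := H2.comp ⟨fun u => (u, 1), continuous_id.prodMk continuous_const⟩
  have hcd : c1 = d0 := by
    ext u; show H1 (u, 1) = H2 (u, 0); rw [h11, h20]
  let K1 : c0.Homotopy c1 :=
    { toFun := fun p => H1 (p.2, p.1)
      continuous_toFun := H1.continuous.comp (continuous_snd.prodMk continuous_fst)
      map_zero_left := fun u => rfl
      map_one_left := fun u => rfl }
  let K2 : d0.Homotopy d1 :=
    { toFun := fun p => H2 (p.2, p.1)
      continuous_toFun := H2.continuous.comp (continuous_snd.prodMk continuous_fst)
      map_zero_left := fun u => rfl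
      map_one_left := fun u => rfl }
  let K := K1.trans (K2.cast hcd.symm rfl)
  refine ⟨⟨fun p => K (p.2, p.1), K.continuous.comp (continuous_snd.prodMk continuous_fst)⟩, ?_, ?_, ?_⟩
  · intro u
    show K (0, u) = f u
    rw [ContinuousMap.Homotopy.apply_zero]; exact h10 u
  · intro u
    show K (1, u) = k u
    rw [ContinuousMap.Homotopy.apply_one]; exact h21 u
  · intro u t
    show pY (K (t, u)) = pX u
    rw [ContinuousMap.Homotopy.trans_apply]
    split_ifs
    · exact h1p u _
    · exact h2p u _

/-- restriction from `univ` to any set -/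
lemma fibRestrict {pX : X → B} {pY : Y → B} {f g : X → Y}
    (hfg : FibHomotopicOn pX pY f g Set.univ) (U : Set X) :
    FibHomotopicOn pX pY f g U := by
  obtain ⟨H, h0, h1, hp⟩ := hfg
  refine ⟨H.comp ⟨fun p => (⟨p.1.1, trivial⟩, p.2), by continuity⟩, ?_, ?_, ?_⟩
  · intro u; exact h0 _
  · intro u; exact h1 _
  · intro u t; exact hp _ _

/-- postcomposition with a continuous fibrewise map -/
lemma fibLeftComp {pX : X → B} {pY : Y → B} {φ ψ : X → X} {U : Set X}
    (f : X → Y) (hf : Continuous f) (hfp : ∀ x, pY (f x) = pX x)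
    (hfg : FibHomotopicOn pX pX φ ψ U) :
    FibHomotopicOn pX pY (f ∘ φ) (f ∘ ψ) U := by
  obtain ⟨H, h0, h1, hp⟩ := hfg
  refine ⟨⟨fun p => f (H p), hf.comp H.continuous⟩, ?_, ?_, ?_⟩
  · intro u; show f (H (u, 0)) = f (φ u); rw [h0]
  · intro u; show f (H (u, 1)) = f (ψ u); rw [h1]
  · intro u t; show pY (f (H (u, t))) = pX u; rw [hfp, hp]

/-- pullback along a continuous fibrewise map -/
lemma fibPullback {pX : X → B} {pX' : X' → B} {pY : Y → B} {f g : X → Y} {U : Set X}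
    (h : X' → X) (hh : Continuous h) (hhp : ∀ x, pX (h x) = pX' x)
    (hfg : FibHomotopicOn pX pY f g U) :
    FibHomotopicOn pX' pY (f ∘ h) (g ∘ h) (h ⁻¹' U) := by
  obtain ⟨H, h0, h1, hp⟩ := hfg
  refine ⟨H.comp ⟨fun p => (⟨h p.1.1, p.1.2⟩, p.2), by continuity⟩, ?_, ?_, ?_⟩
  · intro u; exact h0 _
  · intro u; exact h1 _
  · intro u t
    show pY (H _) = pX' u
    rw [hp, ← hhp]
    rfl

lemma fibDist_mono {pX : X → B} {pY : Y → B} {f₁ g₁ f₂ g₂ : X → Y}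
    (key : ∀ U : Set X, FibHomotopicOn pX pY f₂ g₂ U → FibHomotopicOn pX pY f₁ g₁ U) :
    fibDist pX pY f₁ g₁ ≤ fibDist pX pY f₂ g₂ := by
  refine sInf_le_sInf (Set.image_mono ?_)
  rintro n ⟨U, hopen, hcov, hmem⟩
  exact ⟨U, hopen, hcov, fun i => key _ (hmem i)⟩

lemma fibDist_comp_le (pX : X → B) (pX' : X' → B) (pY : Y → B) (f g : X → Y)
    (h : X' → X) (hh : Continuous h) (hhp : ∀ x, pX (h x) = pX' x) :
    fibDist pX' pY (f ∘ h) (g ∘ h) ≤ fibDist pX pY f g := by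
  refine sInf_le_sInf (Set.image_mono ?_)
  rintro n ⟨U, hopen, hcov, hmem⟩
  refine ⟨fun i => h ⁻¹' (U i), fun i => (hopen i).preimage hh, ?_,
    fun i => fibPullback h hh hhp (hmem i)⟩
  rw [← Set.preimage_iUnion, hcov, Set.preimage_univ]

theorem fibDist_precomp_eq_of_rightInverse (pX : X → B) (pX' : X' → B) (pY : Y → B)
    (f g : X → Y) (h : X' → X) (h'' : X → X')
    (hf : Continuous f) (hg : Continuous g) (hh : Continuous h) (hh'' : Continuous h'')
    (hfp : ∀ x, pY (f x) = pX x) (hgp : ∀ x, pY (g x) = pX x)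
    (hhp : ∀ x, pX (h x) = pX' x) (hh''p : ∀ x, pX' (h'' x) = pX x)
    (hright : FibHomotopicOn pX pX (h ∘ h'') id Set.univ) :
    fibDist pX' pY (f ∘ h) (g ∘ h) = fibDist pX pY f g := by
  refine le_antisymm (fibDist_comp_le pX pX' pY f g h hh hhp) ?_
  have step1 : fibDist pX pY f g ≤ fibDist pX pY (f ∘ (h ∘ h'')) (g ∘ (h ∘ h'')) := by
    refine fibDist_mono fun U hU => ?_
    have rf : FibHomotopicOn pX pY (f ∘ (h ∘ h'')) (f ∘ id) U :=
      fibLeftComp f hf hfp (fibRestrict hright U)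
    have rg : FibHomotopicOn pX pY (g ∘ (h ∘ h'')) (g ∘ id) U :=
      fibLeftComp g hg hgp (fibRestrict hright U)
    exact fibTrans (fibTrans (fibSymm rf) hU) rg
  calc fibDist pX pY f g ≤ fibDist pX pY ((f ∘ h) ∘ h'') ((g ∘ h) ∘ h'') := step1
    _ ≤ fibDist pX' pY (f ∘ h) (g ∘ h) :=
      fibDist_comp_le pX' pX pY (f ∘ h) (g ∘ h) h'' hh'' hh''p
end

section
/- Let f, g, h : X → Y be fibrewise maps over B with X a normal topological space. Then D_B(f, g) ≤ D_B(f, h) + D_B(h, g). -/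
open scoped unitInterval

variable {B X Y Z X' Y' : Type*} [TopologicalSpace B] [TopologicalSpace X]
  [TopologicalSpace Y] [TopologicalSpace Z] [TopologicalSpace X'] [TopologicalSpace Y']

theorem FibHomotopicOn.mono {pX : X → B} {pY : Y → B} {f g : X → Y} {U V : Set X}
    (h : FibHomotopicOn pX pY f g U) (hVU : V ⊆ U) : FibHomotopicOn pX pY f g V := by
  obtain ⟨H, h0, h1, hp⟩ := h
  refine ⟨H.comp ⟨fun p => (Set.inclusion hVU p.1, p.2),
      ((continuous_inclusion hVU).comp continuous_fst).prodMk continuous_snd⟩,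
    fun u => ?_, fun u => ?_, fun u t => ?_⟩
  · simpa using h0 (Set.inclusion hVU u)
  · simpa using h1 (Set.inclusion hVU u)
  · simpa using hp (Set.inclusion hVU u) t

theorem FibHomotopicOn.trans'_s8 {pX : X → B} {pY : Y → B} {f g h : X → Y} {U : Set X}
    (hf : Continuous f) (hg : Continuous g) (hh : Continuous h)
    (H1 : FibHomotopicOn pX pY f h U) (H2 : FibHomotopicOn pX pY h g U) :
    FibHomotopicOn pX pY f g U := by
  obtain ⟨F, F0, F1, Fp⟩ := H1
  obtain ⟨G, G0, G1, Gp⟩ := H2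
  let fU : C(U, Y) := ⟨fun u => f u, hf.comp continuous_subtype_val⟩
  let hU : C(U, Y) := ⟨fun u => h u, hh.comp continuous_subtype_val⟩
  let gU : C(U, Y) := ⟨fun u => g u, hg.comp continuous_subtype_val⟩
  let F' : ContinuousMap.Homotopy fU hU :=
    { toFun := fun p => F (p.2, p.1)
      continuous_toFun := F.continuous.comp (continuous_snd.prodMk continuous_fst)
      map_zero_left := fun u => F0 u
      map_one_left := fun u => F1 u }
  let G' : ContinuousMap.Homotopy hU gU :=
    { toFun := fun p => G (p.2, p.1)
      continuous_toFun := G.continuous.comp (continuous_snd.prodMk continuous_fst)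
      map_zero_left := fun u => G0 u
      map_one_left := fun u => G1 u }
  refine ⟨⟨fun p => (F'.trans G') (p.2, p.1),
      (F'.trans G').continuous.comp (continuous_snd.prodMk continuous_fst)⟩,
    fun u => ?_, fun u => ?_, fun u t => ?_⟩
  · exact (F'.trans G').map_zero_left u
  · exact (F'.trans G').map_one_left u
  · show pY ((F'.trans G') (t, u)) = pX ↑u
    rw [ContinuousMap.Homotopy.trans_apply]
    split_ifs with ht
    · exact Fp u _
    · exact Gp u _

theorem FibHomotopicOn.glue {pX : X → B} {pY : Y → B} {f g : X → Y} {ι : Type*}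
    {W : ι → Set X} (hWo : ∀ i, IsOpen (W i))
    (hdisj : ∀ i j, i ≠ j → Disjoint (W i) (W j))
    (hW : ∀ i, FibHomotopicOn pX pY f g (W i)) :
    FibHomotopicOn pX pY f g (⋃ i, W i) := by
  choose H H0 H1 Hp using hW
  have memU : ∀ u : (⋃ i, W i : Set X), ∃ i, (u : X) ∈ W i := fun u => Set.mem_iUnion.mp u.2
  choose c hc using memU
  have key : ∀ (i) (u : (⋃ i, W i : Set X)), (u : X) ∈ W i → c u = i := by
    intro i u hui
    by_contra hne
    exact Set.disjoint_left.mp (hdisj _ _ hne) (hc u) hui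
  have hcont : Continuous (fun p : (⋃ i, W i : Set X) × unitInterval =>
      H (c p.1) (⟨(p.1 : X), hc p.1⟩, p.2)) := by
    rw [continuous_iff_continuousAt]
    intro p
    have hT : IsOpen {q : (⋃ i, W i : Set X) × unitInterval | (q.1 : X) ∈ W (c p.1)} :=
      (hWo (c p.1)).preimage (continuous_subtype_val.comp continuous_fst)
    have hmem : p ∈ {q : (⋃ i, W i : Set X) × unitInterval | (q.1 : X) ∈ W (c p.1)} := hc p.1
    refine ContinuousOn.continuousAt ?_ (hT.mem_nhds hmem)
    rw [continuousOn_iff_continuous_restrict]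
    have hc2 : Continuous fun q :
        {q : (⋃ i, W i : Set X) × unitInterval // (q.1 : X) ∈ W (c p.1)} =>
        H (c p.1) (⟨(q.1.1 : X), q.2⟩, q.1.2) :=
      (H (c p.1)).continuous.comp
        ((((continuous_subtype_val.comp
            (continuous_fst.comp continuous_subtype_val)).subtype_mk _)).prodMk
          (continuous_snd.comp continuous_subtype_val))
    refine hc2.congr fun q => ?_
    obtain ⟨⟨u, t⟩, hq⟩ := q
    have hce : c p.1 = c u := (key _ _ hq).symm
    show H (c p.1) (⟨(u : X), hq⟩, t) = H (c u) (⟨(u : X), hc u⟩, t)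
    have haux : ∀ (i) (hi : (u : X) ∈ W i) (j) (hj : (u : X) ∈ W j), i = j →
        H i (⟨(u : X), hi⟩, t) = H j (⟨(u : X), hj⟩, t) := by
      rintro i hi j hj rfl; rfl
    exact haux _ hq _ (hc u) hce
  refine ⟨⟨fun p => H (c p.1) (⟨(p.1 : X), hc p.1⟩, p.2), hcont⟩,
    fun u => ?_, fun u => ?_, fun u t => ?_⟩
  · exact H0 (c u) ⟨(u : X), hc u⟩
  · exact H1 (c u) ⟨(u : X), hc u⟩
  · exact Hp (c u) ⟨(u : X), hc u⟩ t

theorem exists_combined_cover [NormalSpace X] {pX : X → B} {pY : Y → B} {f g h : X → Y}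
    (hf : Continuous f) (hg : Continuous g) (hh : Continuous h)
    (m n : ℕ) (U : Fin (m + 1) → Set X) (hUo : ∀ i, IsOpen (U i))
    (hUc : (⋃ i, U i) = Set.univ) (hU : ∀ i, FibHomotopicOn pX pY f h (U i))
    (V : Fin (n + 1) → Set X) (hVo : ∀ j, IsOpen (V j))
    (hVc : (⋃ j, V j) = Set.univ) (hV : ∀ j, FibHomotopicOn pX pY h g (V j)) :
    ∃ W : Fin (m + n + 1) → Set X, (∀ k, IsOpen (W k)) ∧ (⋃ k, W k) = Set.univ ∧
      ∀ k, FibHomotopicOn pX pY f g (W k) := by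
  classical
  obtain ⟨φ, hφ⟩ := BumpCovering.exists_isSubordinate_of_locallyFinite isClosed_univ U hUo
    (locallyFinite_of_finite U) (by rw [hUc])
  obtain ⟨ψ, hψ⟩ := BumpCovering.exists_isSubordinate_of_locallyFinite isClosed_univ V hVo
    (locallyFinite_of_finite V) (by rw [hVc])
  set ρ : Fin (m + 1) × Fin (n + 1) → X → ℝ := fun p x => φ p.1 x * ψ p.2 x with hρdef
  have hρc : ∀ p, Continuous (ρ p) := fun p => (φ p.1).continuous.mul (ψ p.2).continuous
  have hρ0 : ∀ p x, 0 ≤ ρ p x := fun p x => mul_nonneg (φ.nonneg _ _) (ψ.nonneg _ _)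
  set deg : Fin (m + 1) × Fin (n + 1) → ℕ := fun p => p.1.1 + p.2.1 with hdegdef
  set O : Fin (m + 1) × Fin (n + 1) → Set X := fun p =>
    {x | 0 < ρ p x} ∩ ⋂ q ∈ Finset.univ.filter (fun q => deg q = deg p ∧ q ≠ p),
      {x | ρ q x < ρ p x} with hOdef
  have hOmem : ∀ p x, x ∈ O p ↔
      (0 < ρ p x ∧ ∀ q, deg q = deg p → q ≠ p → ρ q x < ρ p x) := by
    intro p x
    simp only [hOdef, Set.mem_inter_iff, Set.mem_iInter, Finset.mem_filter,
      Finset.mem_univ, true_and, Set.mem_setOf_eq]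
    constructor
    · rintro ⟨h1, h2⟩; exact ⟨h1, fun q hq hq' => h2 q ⟨hq, hq'⟩⟩
    · rintro ⟨h1, h2⟩; exact ⟨h1, fun q hq => h2 q hq.1 hq.2⟩
  have hOopen : ∀ p, IsOpen (O p) := fun p =>
    (isOpen_lt continuous_const (hρc p)).inter
      (isOpen_biInter_finset fun q _ => isOpen_lt (hρc q) (hρc p))
  have hOsubU : ∀ p, O p ⊆ U p.1 := by
    intro p x hx
    have h1 : φ p.1 x ≠ 0 := left_ne_zero_of_mul ((hOmem p x).mp hx).1.ne'
    exact hφ p.1 (subset_tsupport _ h1)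
  have hOsubV : ∀ p, O p ⊆ V p.2 := by
    intro p x hx
    have h1 : ψ p.2 x ≠ 0 := right_ne_zero_of_mul ((hOmem p x).mp hx).1.ne'
    exact hψ p.2 (subset_tsupport _ h1)
  have hdisjO : ∀ p q, deg p = deg q → p ≠ q → Disjoint (O p) (O q) := by
    intro p q hdq hne
    rw [Set.disjoint_left]
    intro x hxp hxq
    have h1 := ((hOmem p x).mp hxp).2 q hdq.symm (Ne.symm hne)
    have h2 := ((hOmem q x).mp hxq).2 p hdq hne
    exact absurd h1 (not_lt.mpr h2.le)
  refine ⟨fun k => ⋃ p : {p : Fin (m + 1) × Fin (n + 1) // deg p = (k : ℕ)}, O p.1,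
    fun k => isOpen_iUnion fun p => hOopen p.1, ?_, ?_⟩
  · apply Set.eq_univ_of_forall
    intro x
    -- the argmax set
    set A : Finset (Fin (m + 1) × Fin (n + 1)) :=
      Finset.univ.filter (fun q => ∀ r, ρ r x ≤ ρ q x) with hAdef
    have hAne : A.Nonempty := by
      obtain ⟨p, -, hp⟩ := Finset.exists_max_image Finset.univ (fun p => ρ p x)
        ⟨(0, 0), Finset.mem_univ _⟩
      exact ⟨p, Finset.mem_filter.mpr ⟨Finset.mem_univ _, fun r => hp r (Finset.mem_univ r)⟩⟩
    obtain ⟨p, hpA, hpmin⟩ := Finset.exists_min_image A deg hAne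
    have hpmax : ∀ r, ρ r x ≤ ρ p x := (Finset.mem_filter.mp hpA).2
    -- the maximum is positive
    have hMpos : 0 < ρ p x := by
      have h1 : ρ (φ.ind x (Set.mem_univ x), ψ.ind x (Set.mem_univ x)) x = 1 := by
        simp [hρdef, φ.ind_apply x (Set.mem_univ x), ψ.ind_apply x (Set.mem_univ x)]
      have := hpmax (φ.ind x (Set.mem_univ x), ψ.ind x (Set.mem_univ x))
      rw [h1] at this
      linarith
    have hxO : x ∈ O p := by
      rw [hOmem]
      refine ⟨hMpos, fun q hdq hne => ?_⟩
      rcases lt_or_eq_of_le (hpmax q) with hlt | heq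
      · exact hlt
      -- exchange argument: q is also a maximizer of the same degree
      · exfalso
        set r1 : Fin (m + 1) × Fin (n + 1) := (q.1, p.2) with hr1
        set r2 : Fin (m + 1) × Fin (n + 1) := (p.1, q.2) with hr2
        have hprod : ρ r1 x * ρ r2 x = ρ p x * ρ p x := by
          have : ρ q x = ρ p x := heq
          simp only [hρdef, hr1, hr2] at this ⊢
          linear_combination ((φ p.1) x * (ψ p.2) x) * this
        have hr1le : ρ r1 x ≤ ρ p x := hpmax r1
        have hr2le : ρ r2 x ≤ ρ p x := hpmax r2
        have hr1eq : ρ r1 x = ρ p x := by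
          nlinarith [hρ0 r1 x, hρ0 r2 x, hMpos]
        have hr2eq : ρ r2 x = ρ p x := by
          nlinarith [hρ0 r1 x, hρ0 r2 x, hMpos]
        have hr1A : r1 ∈ A := Finset.mem_filter.mpr
          ⟨Finset.mem_univ _, fun r => hr1eq ▸ hpmax r⟩
        have hr2A : r2 ∈ A := Finset.mem_filter.mpr
          ⟨Finset.mem_univ _, fun r => hr2eq ▸ hpmax r⟩
        have hq1 : (q.1 : ℕ) ≠ (p.1 : ℕ) := by
          intro hq1
          apply hne
          have hq2 : (q.2 : ℕ) = (p.2 : ℕ) := by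
            simp only [hdegdef] at hdq; omega
          exact Prod.ext (Fin.ext hq1) (Fin.ext hq2)
        have hd1 := hpmin r1 hr1A
        have hd2 := hpmin r2 hr2A
        simp only [hdegdef, hr1, hr2] at hd1 hd2 hdq
        omega
    refine Set.mem_iUnion.mpr ⟨⟨deg p, ?_⟩, Set.mem_iUnion.mpr ⟨⟨p, rfl⟩, hxO⟩⟩
    have h1 : (p.1 : ℕ) ≤ m := Nat.lt_succ_iff.mp p.1.isLt
    have h2 : (p.2 : ℕ) ≤ n := Nat.lt_succ_iff.mp p.2.isLt
    simp only [hdegdef]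
    omega
  · intro k
    refine FibHomotopicOn.glue (fun p => hOopen p.1) ?_ ?_
    · intro i j hne
      refine hdisjO i.1 j.1 (by rw [i.2, j.2]) fun he => hne (Subtype.ext he)
    · intro p
      exact FibHomotopicOn.trans'_s8 hf hg hh
        ((hU p.1.1).mono (hOsubU p.1)) ((hV p.1.2).mono (hOsubV p.1))

theorem fibDist_triangle [NormalSpace X] (pX : X → B) (pY : Y → B) (f g h : X → Y)
    (hf : Continuous f) (hg : Continuous g) (hh : Continuous h)
    (hfp : ∀ x, pY (f x) = pX x) (hgp : ∀ x, pY (g x) = pX x) (hhp : ∀ x, pY (h x) = pX x) :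
    fibDist pX pY f g ≤ fibDist pX pY f h + fibDist pX pY h g := by
  classical
  set S1 : Set ℕ := {n : ℕ | ∃ U : Fin (n + 1) → Set X,
      (∀ i, IsOpen (U i)) ∧ (⋃ i, U i) = Set.univ ∧
      ∀ i, FibHomotopicOn pX pY f h (U i)} with hS1
  set S2 : Set ℕ := {n : ℕ | ∃ U : Fin (n + 1) → Set X,
      (∀ i, IsOpen (U i)) ∧ (⋃ i, U i) = Set.univ ∧
      ∀ i, FibHomotopicOn pX pY h g (U i)} with hS2
  have e1 : fibDist pX pY f h = sInf ((fun n : ℕ => (n : ℕ∞)) '' S1) := rfl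
  have e2 : fibDist pX pY h g = sInf ((fun n : ℕ => (n : ℕ∞)) '' S2) := rfl
  by_cases h1 : S1.Nonempty
  · by_cases h2 : S2.Nonempty
    · have hm : sInf S1 ∈ S1 := Nat.sInf_mem h1
      have hn : sInf S2 ∈ S2 := Nat.sInf_mem h2
      obtain ⟨U, hUo, hUc, hU⟩ := hm
      obtain ⟨V, hVo, hVc, hV⟩ := hn
      obtain ⟨W, hWo, hWc, hW⟩ :=
        exists_combined_cover hf hg hh (sInf S1) (sInf S2) U hUo hUc hU V hVo hVc hV
      have hle : fibDist pX pY f g ≤ ((sInf S1 + sInf S2 : ℕ) : ℕ∞) := by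
        apply sInf_le
        exact ⟨sInf S1 + sInf S2, ⟨W, hWo, hWc, hW⟩, rfl⟩
      have e1' : fibDist pX pY f h = ((sInf S1 : ℕ) : ℕ∞) := by
        rw [e1]
        apply le_antisymm
        · exact sInf_le ⟨sInf S1, Nat.sInf_mem h1, rfl⟩
        · apply le_sInf
          rintro b ⟨n', hn', rfl⟩
          exact Nat.cast_le.mpr (Nat.sInf_le hn')
      have e2' : fibDist pX pY h g = ((sInf S2 : ℕ) : ℕ∞) := by
        rw [e2]
        apply le_antisymm
        · exact sInf_le ⟨sInf S2, Nat.sInf_mem h2, rfl⟩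
        · apply le_sInf
          rintro b ⟨n', hn', rfl⟩
          exact Nat.cast_le.mpr (Nat.sInf_le hn')
      calc fibDist pX pY f g ≤ ((sInf S1 + sInf S2 : ℕ) : ℕ∞) := hle
        _ = fibDist pX pY f h + fibDist pX pY h g := by
            rw [e1', e2', Nat.cast_add]
    · have hS2e : S2 = ∅ := Set.not_nonempty_iff_eq_empty.mp h2
      rw [e2, hS2e]
      simp
  · have hS1e : S1 = ∅ := Set.not_nonempty_iff_eq_empty.mp h1
    rw [e1, hS1e]
    simp
end

section
/- For fibrewise maps f, g : X → Y and h : X' → Y' over B, the fibrewise product maps satisfy D_B(f ×_B h, g ×_B h) ≤ D_B(f, g), where f ×_B h, g ×_B h : X ×_B X' → Y ×_B Y'. -/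
open scoped unitInterval

variable {B X Y Z X' Y' : Type*} [TopologicalSpace B] [TopologicalSpace X]
  [TopologicalSpace Y] [TopologicalSpace Z] [TopologicalSpace X'] [TopologicalSpace Y']

theorem fibDist_prodMap_le (pX : X → B) (pX' : X' → B) (pY : Y → B) (pY' : Y' → B)
    (f g : X → Y) (h : X' → Y')
    (hf : Continuous f) (hg : Continuous g) (hh : Continuous h)
    (hfp : ∀ x, pY (f x) = pX x) (hgp : ∀ x, pY (g x) = pX x)
    (hhp : ∀ x, pY' (h x) = pX' x) :
    fibDist (fun z : {z : X × X' // pX z.1 = pX' z.2} => pX z.val.1)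
      (fun w : {w : Y × Y' // pY w.1 = pY' w.2} => pY w.val.1)
      (fun z => (⟨(f z.val.1, h z.val.2),
        (hfp z.val.1).trans (z.prop.trans (hhp z.val.2).symm)⟩ :
          {w : Y × Y' // pY w.1 = pY' w.2}))
      (fun z => (⟨(g z.val.1, h z.val.2),
        (hgp z.val.1).trans (z.prop.trans (hhp z.val.2).symm)⟩ :
          {w : Y × Y' // pY w.1 = pY' w.2})) ≤ fibDist pX pY f g := by

  apply sInf_le_sInf
  rintro m ⟨n, ⟨U, hUo, hUc, hUh⟩, rfl⟩
  refine ⟨n, ⟨fun i => (fun z : {z : X × X' // pX z.1 = pX' z.2} => z.val.1) ⁻¹' U i,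
    fun i => (hUo i).preimage (continuous_fst.comp continuous_subtype_val), ?_, ?_⟩, rfl⟩
  · ext z
    simp only [Set.mem_iUnion, Set.mem_preimage, Set.mem_univ, iff_true]
    have : z.val.1 ∈ ⋃ i, U i := hUc ▸ Set.mem_univ _
    exact Set.mem_iUnion.mp this
  · intro i
    obtain ⟨H, H0, H1, Hfib⟩ := hUh i
    set V : Set {z : X × X' // pX z.1 = pX' z.2} :=
      (fun z : {z : X × X' // pX z.1 = pX' z.2} => z.val.1) ⁻¹' U i with hV
    have key : ∀ (u : V) (t : unitInterval),
        pY (H (⟨u.val.val.1, u.prop⟩, t)) = pY' (h u.val.val.2) := by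
      intro u t
      rw [Hfib, hhp]
      exact u.val.prop
    refine ⟨⟨fun p => ⟨(H (⟨p.1.val.val.1, p.1.prop⟩, p.2), h p.1.val.val.2),
        key p.1 p.2⟩, ?_⟩, ?_, ?_, ?_⟩
    · apply Continuous.subtype_mk
      apply Continuous.prodMk
      · exact H.continuous.comp (Continuous.prodMk
          ((((continuous_fst.comp continuous_subtype_val).comp
            continuous_subtype_val).comp continuous_fst).subtype_mk _) continuous_snd)
      · exact hh.comp (((continuous_snd.comp continuous_subtype_val).comp
          continuous_subtype_val).comp continuous_fst)
    · intro u
      apply Subtype.ext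
      simp only [ContinuousMap.coe_mk]
      exact Prod.ext (by rw [H0]) rfl
    · intro u
      apply Subtype.ext
      simp only [ContinuousMap.coe_mk]
      exact Prod.ext (by rw [H1]) rfl
    · intro u t
      exact Hfib _ _
end

section
/- For a fibrewise pointed space X over B, the fibrewise unpointed LS category satisfies cat_B^*(X) = D_B(i_1, i_2), where i_1 = (id_X, s_X ∘ p_X) and i_2 = (s_X ∘ p_X, id_X) are the two fibrewise inclusions X → X ×_B X. -/
open scoped unitInterval

variable {B X Y Z X' Y' : Type*} [TopologicalSpace B] [TopologicalSpace X]
  [TopologicalSpace Y] [TopologicalSpace Z] [TopologicalSpace X'] [TopologicalSpace Y']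

lemma fibHomotopicOn_iff (pX : X → B) (sX : B → X)
    (hsec : ∀ b, pX (sX b) = b) (U : Set X) :
    FibHomotopicOn pX pX id (fun x => sX (pX x)) U ↔
      FibHomotopicOn pX (fun z : {z : X × X // pX z.1 = pX z.2} => pX z.val.1)
        (fun x => (⟨(x, sX (pX x)), (hsec (pX x)).symm⟩ :
          {z : X × X // pX z.1 = pX z.2}))
        (fun x => (⟨(sX (pX x), x), hsec (pX x)⟩ :
          {z : X × X // pX z.1 = pX z.2})) U := by
  constructor
  · rintro ⟨H, h0, h1, hp⟩
    refine ⟨⟨fun p => ⟨(H p, H (p.1, unitInterval.symm p.2)), ?_⟩, ?_⟩, ?_, ?_, ?_⟩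
    · rw [hp p.1 p.2, hp p.1 (unitInterval.symm p.2)]
    · apply Continuous.subtype_mk
      exact (H.continuous).prodMk
        (H.continuous.comp (continuous_fst.prodMk
          (unitInterval.continuous_symm.comp continuous_snd)))
    · intro u
      apply Subtype.ext
      show (H (u, 0), H (u, unitInterval.symm 0)) = _
      rw [unitInterval.symm_zero, h0 u, h1 u]; rfl
    · intro u
      apply Subtype.ext
      show (H (u, 1), H (u, unitInterval.symm 1)) = _
      rw [unitInterval.symm_one, h0 u, h1 u]; rfl
    · intro u t
      exact hp u t
  · rintro ⟨K, h0, h1, hp⟩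
    refine ⟨⟨fun p => (K p).val.1, (K.continuous.subtype_val).fst⟩, ?_, ?_, ?_⟩
    · intro u; simp only [ContinuousMap.coe_mk]; rw [h0 u]; rfl
    · intro u; simp only [ContinuousMap.coe_mk]; rw [h1 u]
    · intro u t; exact hp u t

theorem fibCat_eq_fibDist_i1_i2 (pX : X → B) (sX : B → X)
    (hpX : Continuous pX) (hsX : Continuous sX) (hsec : ∀ b, pX (sX b) = b) :
    fibDist pX pX id (fun x => sX (pX x)) =
      fibDist pX (fun z : {z : X × X // pX z.1 = pX z.2} => pX z.val.1)
        (fun x => (⟨(x, sX (pX x)), (hsec (pX x)).symm⟩ :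
          {z : X × X // pX z.1 = pX z.2}))
        (fun x => (⟨(sX (pX x), x), hsec (pX x)⟩ :
          {z : X × X // pX z.1 = pX z.2})) := by
  unfold fibDist
  congr 1
  ext n
  simp only [Set.mem_image, Set.mem_setOf_eq]
  constructor
  · rintro ⟨m, ⟨U, hU1, hU2, hU3⟩, rfl⟩
    exact ⟨m, ⟨U, hU1, hU2,
      fun i => (fibHomotopicOn_iff pX sX hsec (U i)).mp (hU3 i)⟩, rfl⟩
  · rintro ⟨m, ⟨U, hU1, hU2, hU3⟩, rfl⟩
    exact ⟨m, ⟨U, hU1, hU2,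
      fun i => (fibHomotopicOn_iff pX sX hsec (U i)).mpr (hU3 i)⟩, rfl⟩
end

section
/- Let f : X → Y be a fibrewise pointed map between fibrewise pointed spaces over B. Then cat_B^*(f) ≤ min{cat_B^*(X), cat_B^*(Y)}, where cat_B^*(f) = D_B(f, s_Y ∘ p_X). -/
open scoped unitInterval

variable {B X Y Z X' Y' : Type*} [TopologicalSpace B] [TopologicalSpace X]
  [TopologicalSpace Y] [TopologicalSpace Z] [TopologicalSpace X'] [TopologicalSpace Y']

theorem fibCat_map_le_min (pX : X → B) (pY : Y → B) (sX : B → X) (sY : B → Y)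
    (f : X → Y)
    (hpX : Continuous pX) (hpY : Continuous pY) (hsX : Continuous sX) (hsY : Continuous sY)
    (hsecX : ∀ b, pX (sX b) = b) (hsecY : ∀ b, pY (sY b) = b)
    (hf : Continuous f) (hfp : ∀ x, pY (f x) = pX x) (hfs : ∀ b, f (sX b) = sY b) :
    fibDist pX pY f (fun x => sY (pX x)) ≤
      min (fibDist pX pX id (fun x => sX (pX x)))
        (fibDist pY pY id (fun y => sY (pY y))) := by
  refine le_min (sInf_le_sInf ?_) (sInf_le_sInf ?_)
  · rintro _ ⟨n, ⟨U, hUo, hUc, hH⟩, rfl⟩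
    refine ⟨n, ⟨U, hUo, hUc, fun i => ?_⟩, rfl⟩
    obtain ⟨H, h0, h1, hfib⟩ := hH i
    refine ⟨⟨fun p => f (H p), hf.comp H.continuous⟩, fun u => ?_, fun u => ?_, fun u t => ?_⟩
    · simp [h0 u]
    · simp only [ContinuousMap.coe_mk, h1 u, hfs]
    · simp only [ContinuousMap.coe_mk, hfp, hfib]
  · rintro _ ⟨n, ⟨V, hVo, hVc, hH⟩, rfl⟩
    refine ⟨n, ⟨fun i => f ⁻¹' V i, fun i => (hVo i).preimage hf, ?_, fun i => ?_⟩, rfl⟩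
    · apply Set.eq_univ_of_forall; intro x
      have : f x ∈ ⋃ i, V i := hVc ▸ Set.mem_univ _
      simpa using this
    · obtain ⟨H, h0, h1, hfib⟩ := hH i
      refine ⟨⟨fun p => H (⟨f p.1, p.1.2⟩, p.2), ?_⟩, fun u => ?_, fun u => ?_, fun u t => ?_⟩
      · exact H.continuous.comp (by continuity)
      · exact h0 ⟨f u, u.2⟩
      · have := h1 ⟨f u, u.2⟩
        simp only [ContinuousMap.coe_mk] at this ⊢
        rw [this, hfp]
      · have := hfib ⟨f u, u.2⟩ t
        simp only [ContinuousMap.coe_mk] at this ⊢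
        rw [this, hfp]
end

section
/- For fibrewise pointed maps f, g : X → Y over B, D_B(f, g) ≤ min{cat_B^*(X), TC_B(Y)}, where TC_B(Y) = D_B(pr_1, pr_2) for the projections pr_1, pr_2 : Y ×_B Y → Y. -/
open scoped unitInterval

variable {B X Y Z X' Y' : Type*} [TopologicalSpace B] [TopologicalSpace X]
  [TopologicalSpace Y] [TopologicalSpace Z] [TopologicalSpace X'] [TopologicalSpace Y']

/-- On any set where `id` is fibrewise homotopic to `sX ∘ pX`, the maps `f` and `g`
are fibrewise homotopic (concatenate `f ∘ H` with the reverse of `g ∘ H`). -/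
lemma FibHomotopicOn.of_cat (pX : X → B) (pY : Y → B) (sX : B → X) (sY : B → Y) (f g : X → Y)
    (hpX : Continuous pX) (hsY : Continuous sY)
    (hf : Continuous f) (hg : Continuous g)
    (hfp : ∀ x, pY (f x) = pX x) (hgp : ∀ x, pY (g x) = pX x)
    (hfs : ∀ b, f (sX b) = sY b) (hgs : ∀ b, g (sX b) = sY b)
    (U : Set X) (h : FibHomotopicOn pX pX id (fun x => sX (pX x)) U) :
    FibHomotopicOn pX pY f g U := by
  obtain ⟨H, h0, h1, hfib⟩ := h
  let Fc : C(U, Y) := ⟨fun u => f u, hf.comp continuous_subtype_val⟩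
  let Sc : C(U, Y) := ⟨fun u => sY (pX u), hsY.comp (hpX.comp continuous_subtype_val)⟩
  let Gc : C(U, Y) := ⟨fun u => g u, hg.comp continuous_subtype_val⟩
  let F : Fc.Homotopy Sc :=
    { toContinuousMap := ⟨fun p => f (H (p.2, p.1)),
        hf.comp (H.continuous.comp (continuous_snd.prodMk continuous_fst))⟩
      map_zero_left := fun u => congrArg f (h0 u)
      map_one_left := fun u => (congrArg f (h1 u)).trans (hfs _) }
  let G : Sc.Homotopy Gc :=
    { toContinuousMap := ⟨fun p => g (H (p.2, unitInterval.symm p.1)),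
        hg.comp (H.continuous.comp (continuous_snd.prodMk
          (unitInterval.continuous_symm.comp continuous_fst)))⟩
      map_zero_left := fun u => by
        show g (H (u, unitInterval.symm 0)) = Sc u
        rw [unitInterval.symm_zero, h1 u]; exact hgs _
      map_one_left := fun u => by
        show g (H (u, unitInterval.symm 1)) = Gc u
        rw [unitInterval.symm_one, h0 u]; rfl }
  refine ⟨⟨fun p => (F.trans G) (p.2, p.1),
      (F.trans G).continuous.comp (continuous_snd.prodMk continuous_fst)⟩,
    fun u => (F.trans G).apply_zero u, fun u => (F.trans G).apply_one u, fun u t => ?_⟩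
  show pY ((F.trans G) (t, u)) = pX u
  rw [ContinuousMap.Homotopy.trans_apply]
  split_ifs with h
  · exact (hfp (H (u, _))).trans (hfib u _)
  · exact (hgp (H (u, _))).trans (hfib u _)

theorem fibDist_le_min_cat_TC (pX : X → B) (pY : Y → B) (sX : B → X) (sY : B → Y)
    (f g : X → Y)
    (hpX : Continuous pX) (hpY : Continuous pY) (hsX : Continuous sX) (hsY : Continuous sY)
    (hsecX : ∀ b, pX (sX b) = b) (hsecY : ∀ b, pY (sY b) = b)
    (hf : Continuous f) (hg : Continuous g)
    (hfp : ∀ x, pY (f x) = pX x) (hgp : ∀ x, pY (g x) = pX x)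
    (hfs : ∀ b, f (sX b) = sY b) (hgs : ∀ b, g (sX b) = sY b) :
    fibDist pX pY f g ≤
      min (fibDist pX pX id (fun x => sX (pX x)))
        (fibDist (fun w : {w : Y × Y // pY w.1 = pY w.2} => pY w.val.1) pY
          (fun w => w.val.1) (fun w => w.val.2)) := by
  refine le_min (sInf_le_sInf ?_) (sInf_le_sInf ?_)
  · rintro x ⟨n, ⟨U, hopen, hcov, hH⟩, rfl⟩
    exact ⟨n, ⟨U, hopen, hcov, fun i =>
      FibHomotopicOn.of_cat pX pY sX sY f g hpX hsY hf hg hfp hgp hfs hgs _ (hH i)⟩, rfl⟩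
  · rintro x ⟨n, ⟨W, hopen, hcov, hH⟩, rfl⟩
    have hΦ : Continuous fun x : X => (⟨(f x, g x), by rw [hfp, hgp]⟩ :
        {w : Y × Y // pY w.1 = pY w.2}) := (hf.prodMk hg).subtype_mk _
    refine ⟨n, ⟨fun i => (fun x : X => (⟨(f x, g x), by rw [hfp, hgp]⟩ :
        {w : Y × Y // pY w.1 = pY w.2})) ⁻¹' W i,
      fun i => (hopen i).preimage hΦ, ?_, fun i => ?_⟩, rfl⟩
    · rw [← Set.preimage_iUnion, hcov, Set.preimage_univ]
    · obtain ⟨H, h0, h1, hfib⟩ := hH i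
      refine ⟨⟨fun p => H (⟨⟨(f p.1.1, g p.1.1), by rw [hfp, hgp]⟩, p.1.2⟩, p.2),
        H.continuous.comp ((Continuous.subtype_mk
          (hΦ.comp (continuous_subtype_val.comp continuous_fst)) _).prodMk
          continuous_snd)⟩, fun u => h0 _, fun u => h1 _, fun u t => (hfib _ t).trans (hfp _)⟩
end
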